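/- Neither ω nor ω² (nor their negatives) can be written as x³ + y³ with x, y ∈ ℚ(ω); in other words, a unit of ℤ[ω] other than 1 or -1 is not a sum of two cubes in ℚ(ω). -/

import Mathlib

open NumberField IsCyclotomicExtension.Rat.Three

private lemma key_lemma {R : Type*} [CommRing R] [IsDomain R] {η : R}
    (hs : η ^ 2 + η + 1 = 0) (hP : Prime (η - 1)) :
    ∀ v k : R, (v = η ∨ v = -η ∨ v = η ^ 2 ∨ v = -η ^ 2) →
      (k = 0 ∨ k = 1 ∨ k = -1 ∨ k = 2 ∨ k = -2) → ¬ (η - 1) ^ 2 ∣ (v - k) := by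
  have h23 : (η - 1) ^ 2 ∣ 3 := ⟨-η ^ 2, by linear_combination (η ^ 2 - 3 * η + 3) * hs⟩
  have hself : (η - 1) ∣ (η - 1) ^ 2 := dvd_pow_self _ two_ne_zero
  have h13 : (η - 1) ∣ 3 := hself.trans h23
  have hnd1 : ¬ (η - 1) ∣ 1 := hP.not_dvd_one
  have hnd2 : ¬ (η - 1) ∣ 2 := fun h => hnd1 (by
    have h' := dvd_sub h13 h; norm_num at h'; exact h')
  have hnd4 : ¬ (η - 1) ∣ 4 := fun h => hnd1 (by
    have h' := dvd_sub h h13; norm_num at h'; exact h')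
  have hnm1 : ¬ (η - 1) ∣ (-1 : R) := fun h => hnd1 (dvd_neg.mp h)
  have hll : ¬ (η - 1) ^ 2 ∣ (η - 1) := by
    rintro ⟨t, ht⟩
    refine hP.not_isUnit (IsUnit.of_mul_eq_one t ?_)
    exact (mul_left_cancel₀ hP.ne_zero (show (η - 1) * 1 = (η - 1) * ((η - 1) * t) by
      rw [mul_one]; linear_combination ht)).symm
  have Hgen : ∀ c : R, ¬ (η - 1) ∣ c → ¬ (η - 1) ^ 2 ∣ (η - 1 + c) := fun c hc h =>
    hc (by simpa using dvd_sub (hself.trans h) (dvd_refl (η - 1)))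
  have H3 : ¬ (η - 1) ^ 2 ∣ (η + 2) := fun h => hll (by
    have h' := dvd_sub h h23
    rwa [show η + 2 - 3 = η - 1 by ring] at h')
  rintro v k hv (rfl | rfl | rfl | rfl | rfl) <;> rcases hv with hv | hv | hv | hv <;>
      rw [hv] <;> intro h
  · exact Hgen 1 hnd1 (by rw [show η - 0 = η - 1 + 1 by ring] at h; exact h)
  · exact Hgen 1 hnd1 (dvd_neg.mp (by rw [show -η - 0 = -(η - 1 + 1) by ring] at h; exact h))
  · exact Hgen 2 hnd2 (dvd_neg.mp
      (by rw [show η ^ 2 - 0 = -(η - 1 + 2) by linear_combination hs] at h; exact h))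
  · exact Hgen 2 hnd2 (by rw [show -η ^ 2 - 0 = η - 1 + 2 by linear_combination -hs] at h; exact h)
  · exact hll (by rw [show η - 1 = η - 1 by ring] at h; exact h)
  · exact Hgen 2 hnd2 (dvd_neg.mp (by rw [show -η - 1 = -(η - 1 + 2) by ring] at h; exact h))
  · exact H3 (dvd_neg.mp (by rw [show η ^ 2 - 1 = -(η + 2) by linear_combination hs] at h; exact h))
  · exact Hgen 1 hnd1 (by rw [show -η ^ 2 - 1 = η - 1 + 1 by linear_combination -hs] at h; exact h)
  · exact Hgen 2 hnd2 (by rw [show η - -1 = η - 1 + 2 by ring] at h; exact h)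
  · exact hll (dvd_neg.mp (by rw [show -η - -1 = -(η - 1) by ring] at h; exact h))
  · exact Hgen 1 hnd1 (dvd_neg.mp
      (by rw [show η ^ 2 - -1 = -(η - 1 + 1) by linear_combination hs] at h; exact h))
  · exact H3 (by rw [show -η ^ 2 - -1 = η + 2 by linear_combination -hs] at h; exact h)
  · exact Hgen (-1) hnm1 (by rw [show η - 2 = η - 1 + -1 by ring] at h; exact h)
  · exact H3 (dvd_neg.mp (by rw [show -η - 2 = -(η + 2) by ring] at h; exact h))
  · exact Hgen 4 hnd4 (dvd_neg.mp
      (by rw [show η ^ 2 - 2 = -(η - 1 + 4) by linear_combination hs] at h; exact h))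
  · exact hll (by rw [show -η ^ 2 - 2 = η - 1 by linear_combination -hs] at h; exact h)
  · exact H3 (by rw [show η - -2 = η + 2 by ring] at h; exact h)
  · exact Hgen (-1) hnm1 (dvd_neg.mp
      (by rw [show -η - -2 = -(η - 1 + -1) by ring] at h; exact h))
  · exact hll (dvd_neg.mp
      (by rw [show η ^ 2 - -2 = -(η - 1) by linear_combination hs] at h; exact h))
  · exact Hgen 4 hnd4
      (by rw [show -η ^ 2 - -2 = η - 1 + 4 by linear_combination -hs] at h; exact h)

section eisenstein

open NumberField IsCyclotomicExtension.Rat.Three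

variable {K : Type*} [Field K]
variable {ζ : K} (hζ : IsPrimitiveRoot ζ 3)

namespace FermatLastTheoremForThreeGen

/-- `Solution'` is a tuple given by a solution to `a ^ 3 + b ^ 3 = u * c ^ 3`,
where `a`, `b`, `c` and `u` are as in `FermatLastTheoremForThreeGen`.
See `Solution` for the actual structure on which we will do the descent. -/
structure Solution' where
  a : 𝓞 K
  b : 𝓞 K
  c : 𝓞 K
  u : (𝓞 K)ˣ
  ha : ¬ (hζ.toInteger - 1) ∣ a
  hb : ¬ (hζ.toInteger - 1) ∣ b
  hc : c ≠ 0
  coprime : IsCoprime a b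
  hcdvd : (hζ.toInteger - 1) ∣ c
  H : a ^ 3 + b ^ 3 = u * c ^ 3

/-- `Solution` is the same as `Solution'` with the additional assumption that `(hζ.toInteger - 1) ^ 2 ∣ a + b`. -/
structure Solution extends Solution' hζ where
  hab : (hζ.toInteger - 1) ^ 2 ∣ a + b

variable {hζ}
variable (S : Solution hζ) (S' : Solution' hζ)

section IsCyclotomicExtension

variable [NumberField K] [IsCyclotomicExtension {3} ℚ K]

/-- For any `S' : Solution'`, the multiplicity of `(hζ.toInteger - 1)` in `S'.c` is finite. -/
lemma Solution'.multiplicity_lambda_c_finite :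
    FiniteMultiplicity (hζ.toInteger - 1) S'.c :=
  .of_not_isUnit hζ.zeta_sub_one_prime'.not_isUnit S'.hc

/-- Given `S' : Solution'`, `S'.multiplicity` is the multiplicity of `(hζ.toInteger - 1)` in `S'.c`, as a natural
number. -/
noncomputable def Solution'.multiplicity :=
  _root_.multiplicity (hζ.toInteger - 1) S'.c

/-- Given `S : Solution`, `S.multiplicity` is the multiplicity of `(hζ.toInteger - 1)` in `S.c`, as a natural
number. -/
noncomputable def Solution.multiplicity := S.toSolution'.multiplicity

/-- We say that `S : Solution` is minimal if for all `S₁ : Solution`, the multiplicity of `(hζ.toInteger - 1)` in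
`S.c` is less or equal than the multiplicity in `S₁.c`. -/
def Solution.isMinimal : Prop := ∀ (S₁ : Solution hζ), S.multiplicity ≤ S₁.multiplicity

/-- If there is a solution then there is a minimal one. -/
lemma Solution.exists_minimal (S : Solution hζ) : ∃ (S₁ : Solution hζ), S₁.isMinimal := by
  classical
  let T := {n | ∃ (S' : Solution hζ), S'.multiplicity = n}
  rcases Nat.find_spec (⟨S.multiplicity, ⟨S, rfl⟩⟩ : T.Nonempty) with ⟨S₁, hS₁⟩
  exact ⟨S₁, fun S'' ↦ hS₁ ▸ Nat.find_min' _ ⟨S'', rfl⟩⟩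

/-- Given `S' : Solution'`, then `S'.a` and `S'.b` are both congruent to `1` modulo `(hζ.toInteger - 1) ^ 4` or are
both congruent to `-1`. -/
lemma a_cube_b_cube_congr_one_or_neg_one :
    (hζ.toInteger - 1) ^ 4 ∣ S'.a ^ 3 - 1 ∧ (hζ.toInteger - 1) ^ 4 ∣ S'.b ^ 3 + 1 ∨ (hζ.toInteger - 1) ^ 4 ∣ S'.a ^ 3 + 1 ∧ (hζ.toInteger - 1) ^ 4 ∣ S'.b ^ 3 - 1 := by
  obtain ⟨z, hz⟩ := S'.hcdvd
  rcases lambda_pow_four_dvd_cube_sub_one_or_add_one_of_lambda_not_dvd hζ S'.ha with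
    ⟨x, hx⟩ | ⟨x, hx⟩ <;>
  rcases lambda_pow_four_dvd_cube_sub_one_or_add_one_of_lambda_not_dvd hζ S'.hb with
    ⟨y, hy⟩ | ⟨y, hy⟩
  · exfalso
    replace hζ : IsPrimitiveRoot ζ (3 ^ 1) := by rwa [pow_one]
    refine hζ.toInteger_sub_one_not_dvd_two (by decide) ⟨S'.u * (hζ.toInteger - 1) ^ 2 * z ^ 3 - (hζ.toInteger - 1) ^ 3 * (x + y), ?_⟩
    symm
    calc _ = S'.u * ((hζ.toInteger - 1) * z) ^ 3 - (hζ.toInteger - 1) ^ 4 * x - (hζ.toInteger - 1) ^ 4 * y := by ring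
    _ = (S'.a ^ 3 + S'.b ^ 3) - (S'.a ^ 3 - 1) - (S'.b ^ 3 - 1) := by rw [← hx, ← hy, ← hz, ← S'.H]
    _ = 2 := by ring
  · left
    exact ⟨⟨x, hx⟩, ⟨y, hy⟩⟩
  · right
    exact ⟨⟨x, hx⟩, ⟨y, hy⟩⟩
  · exfalso
    replace hζ : IsPrimitiveRoot ζ (3 ^ 1) := by rwa [pow_one]
    refine hζ.toInteger_sub_one_not_dvd_two (by decide) ⟨(hζ.toInteger - 1) ^ 3 * (x + y) - S'.u * (hζ.toInteger - 1) ^ 2 * z ^ 3, ?_⟩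
    symm
    calc _ = (hζ.toInteger - 1) ^ 4 * x + (hζ.toInteger - 1) ^ 4 * y - S'.u * ((hζ.toInteger - 1) * z) ^ 3 := by ring
    _ = (S'.a ^ 3 + 1) + (S'.b ^ 3 + 1) - (S'.a ^ 3 + S'.b ^ 3) := by rw [← hx, ← hy, ← hz, ← S'.H]
    _ = 2 := by ring

/-- Given `S' : Solution'`, we have that `(hζ.toInteger - 1) ^ 4` divides `S'.c ^ 3`. -/
lemma lambda_pow_four_dvd_c_cube : (hζ.toInteger - 1) ^ 4 ∣ S'.c ^ 3 := by
  rcases a_cube_b_cube_congr_one_or_neg_one S' with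
    ⟨⟨x, hx⟩, ⟨y, hy⟩⟩ | ⟨⟨x, hx⟩, ⟨y, hy⟩⟩ <;>
  · refine ⟨S'.u⁻¹ * (x + y), ?_⟩
    symm
    calc _ = S'.u⁻¹ * ((hζ.toInteger - 1) ^ 4 * x + (hζ.toInteger - 1) ^ 4 * y) := by ring
    _ = S'.u⁻¹ * (S'.a ^ 3 + S'.b ^ 3) := by rw [← hx, ← hy]; ring
    _ = S'.u⁻¹ * (S'.u * S'.c ^ 3) := by rw [S'.H]
    _ = S'.c ^ 3 := by simp

/-- Given `S' : Solution'`, we have that `(hζ.toInteger - 1) ^ 2` divides `S'.c`. -/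
lemma lambda_sq_dvd_c : (hζ.toInteger - 1) ^ 2 ∣ S'.c := by
  have hm := S'.multiplicity_lambda_c_finite
  have := lambda_pow_four_dvd_c_cube S'
  rw [pow_dvd_iff_le_emultiplicity, emultiplicity_pow hζ.zeta_sub_one_prime',
    hm.emultiplicity_eq_multiplicity] at this
  norm_cast at this
  exact (FiniteMultiplicity.pow_dvd_iff_le_multiplicity hm).mpr (by lia)

/-- Given `S' : Solution'`, we have that `2 ≤ S'.multiplicity`. -/
lemma Solution'.two_le_multiplicity : 2 ≤ S'.multiplicity := by
  simpa [Solution'.multiplicity] using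
    S'.multiplicity_lambda_c_finite.le_multiplicity_of_pow_dvd (lambda_sq_dvd_c S')

/-- Given `S : Solution`, we have that `2 ≤ S.multiplicity`. -/
lemma Solution.two_le_multiplicity : 2 ≤ S.multiplicity :=
  S.toSolution'.two_le_multiplicity

end IsCyclotomicExtension

-- This is just a computation and the formulas are too long.
set_option linter.style.whitespace false in
/-- Given `S' : Solution'`, the key factorization of `S'.a ^ 3 + S'.b ^ 3`. -/
lemma a_cube_add_b_cube_eq_mul :
    S'.a ^ 3 + S'.b ^ 3 = (S'.a + S'.b) * (S'.a + (IsPrimitiveRoot.isUnit (hζ.toInteger_isPrimitiveRoot) (by decide)).unit * S'.b) * (S'.a + (IsPrimitiveRoot.isUnit (hζ.toInteger_isPrimitiveRoot) (by decide)).unit ^ 2 * S'.b) := by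
  symm
  calc _ = S'.a^3+S'.a^2*S'.b*((IsPrimitiveRoot.isUnit (hζ.toInteger_isPrimitiveRoot) (by decide)).unit^2+(IsPrimitiveRoot.isUnit (hζ.toInteger_isPrimitiveRoot) (by decide)).unit+1)+S'.a*S'.b^2*((IsPrimitiveRoot.isUnit (hζ.toInteger_isPrimitiveRoot) (by decide)).unit^2+(IsPrimitiveRoot.isUnit (hζ.toInteger_isPrimitiveRoot) (by decide)).unit+(IsPrimitiveRoot.isUnit (hζ.toInteger_isPrimitiveRoot) (by decide)).unit^3)+(IsPrimitiveRoot.isUnit (hζ.toInteger_isPrimitiveRoot) (by decide)).unit^3*S'.b^3 := by ring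
  _ = S'.a^3+S'.a^2*S'.b*((IsPrimitiveRoot.isUnit (hζ.toInteger_isPrimitiveRoot) (by decide)).unit^2+(IsPrimitiveRoot.isUnit (hζ.toInteger_isPrimitiveRoot) (by decide)).unit+1)+S'.a*S'.b^2*((IsPrimitiveRoot.isUnit (hζ.toInteger_isPrimitiveRoot) (by decide)).unit^2+(IsPrimitiveRoot.isUnit (hζ.toInteger_isPrimitiveRoot) (by decide)).unit+1)+S'.b^3 := by
    simp [hζ.toInteger_cube_eq_one]
  _ = S'.a ^ 3 + S'.b ^ 3 := by rw [eta_sq]; ring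

section IsCyclotomicExtension
variable [NumberField K] [IsCyclotomicExtension {3} ℚ K]

/-- Given `S' : Solution'`, we have that `(hζ.toInteger - 1) ^ 2` divides one amongst `S'.a + S'.b`,
`S'.a + (IsPrimitiveRoot.isUnit (hζ.toInteger_isPrimitiveRoot) (by decide)).unit * S'.b` and `S'.a + (IsPrimitiveRoot.isUnit (hζ.toInteger_isPrimitiveRoot) (by decide)).unit ^ 2 * S'.b`. -/
lemma lambda_sq_dvd_or_dvd_or_dvd :
    (hζ.toInteger - 1) ^ 2 ∣ S'.a + S'.b ∨ (hζ.toInteger - 1) ^ 2 ∣ S'.a + (IsPrimitiveRoot.isUnit (hζ.toInteger_isPrimitiveRoot) (by decide)).unit * S'.b ∨ (hζ.toInteger - 1) ^ 2 ∣ S'.a + (IsPrimitiveRoot.isUnit (hζ.toInteger_isPrimitiveRoot) (by decide)).unit ^ 2 * S'.b := by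
  by_contra! ⟨h1, h2, h3⟩
  rw [← emultiplicity_lt_iff_not_dvd] at h1 h2 h3
  have h1' : FiniteMultiplicity (hζ.toInteger - 1) (S'.a + S'.b) :=
    finiteMultiplicity_iff_emultiplicity_ne_top.2 (fun ht ↦ by simp [ht] at h1)
  have h2' : FiniteMultiplicity (hζ.toInteger - 1) (S'.a + (IsPrimitiveRoot.isUnit (hζ.toInteger_isPrimitiveRoot) (by decide)).unit * S'.b) := by
    refine finiteMultiplicity_iff_emultiplicity_ne_top.2 (fun ht ↦ ?_)
    rw [coe_eta] at ht
    simp [ht] at h2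
  have h3' : FiniteMultiplicity (hζ.toInteger - 1) (S'.a + (IsPrimitiveRoot.isUnit (hζ.toInteger_isPrimitiveRoot) (by decide)).unit ^ 2 * S'.b) := by
    refine finiteMultiplicity_iff_emultiplicity_ne_top.2 (fun ht ↦ ?_)
    rw [coe_eta] at ht
    simp [ht] at h3
  rw [h1'.emultiplicity_eq_multiplicity, Nat.cast_lt] at h1
  rw [h2'.emultiplicity_eq_multiplicity, Nat.cast_lt] at h2
  rw [h3'.emultiplicity_eq_multiplicity, Nat.cast_lt] at h3
  have := (pow_dvd_pow_of_dvd (lambda_sq_dvd_c S') 3).mul_left S'.u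
  rw [← pow_mul, ← S'.H, a_cube_add_b_cube_eq_mul, pow_dvd_iff_le_emultiplicity,
    emultiplicity_mul hζ.zeta_sub_one_prime', emultiplicity_mul hζ.zeta_sub_one_prime',
      h1'.emultiplicity_eq_multiplicity, h2'.emultiplicity_eq_multiplicity,
      h3'.emultiplicity_eq_multiplicity, ← Nat.cast_add, ← Nat.cast_add, Nat.cast_le] at this
  lia

open Units in
/-- Given `S' : Solution'`, we may assume that `(hζ.toInteger - 1) ^ 2` divides `S'.a + S'.b ∨ (hζ.toInteger - 1) ^ 2` (see also the
result below). -/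
lemma ex_cube_add_cube_eq_and_isCoprime_and_not_dvd_and_dvd :
    ∃ (a' b' : 𝓞 K), a' ^ 3 + b' ^ 3 = S'.u * S'.c ^ 3 ∧ IsCoprime a' b' ∧ ¬ (hζ.toInteger - 1) ∣ a' ∧
      ¬ (hζ.toInteger - 1) ∣ b' ∧ (hζ.toInteger - 1) ^ 2 ∣ a' + b' := by
  rcases lambda_sq_dvd_or_dvd_or_dvd S' with h | h | h
  · exact ⟨S'.a, S'.b, S'.H, S'.coprime, S'.ha, S'.hb, h⟩
  · refine ⟨S'.a, (IsPrimitiveRoot.isUnit (hζ.toInteger_isPrimitiveRoot) (by decide)).unit * S'.b, ?_, ?_, S'.ha, fun ⟨x, hx⟩ ↦ S'.hb ⟨(IsPrimitiveRoot.isUnit (hζ.toInteger_isPrimitiveRoot) (by decide)).unit ^ 2 * x, ?_⟩, h⟩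
    · simp [mul_pow, hζ.toInteger_cube_eq_one, one_mul, S'.H]
    · refine (isCoprime_mul_unit_left_right (Units.isUnit (IsPrimitiveRoot.isUnit (hζ.toInteger_isPrimitiveRoot) (by decide)).unit) _ _).2 S'.coprime
    · rw [mul_comm _ x, ← mul_assoc, ← hx, mul_comm _ S'.b, mul_assoc, ← pow_succ', coe_eta,
        hζ.toInteger_cube_eq_one, mul_one]
  · refine ⟨S'.a, (IsPrimitiveRoot.isUnit (hζ.toInteger_isPrimitiveRoot) (by decide)).unit ^ 2 * S'.b, ?_, ?_, S'.ha, fun ⟨x, hx⟩ ↦ S'.hb ⟨(IsPrimitiveRoot.isUnit (hζ.toInteger_isPrimitiveRoot) (by decide)).unit * x, ?_⟩, h⟩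
    · rw [mul_pow, ← pow_mul, mul_comm 2, pow_mul, coe_eta, hζ.toInteger_cube_eq_one, one_pow,
        one_mul, S'.H]
    · exact (isCoprime_mul_unit_left_right ((Units.isUnit (IsPrimitiveRoot.isUnit (hζ.toInteger_isPrimitiveRoot) (by decide)).unit).pow _) _ _).2 S'.coprime
    · rw [mul_comm _ x, ← mul_assoc, ← hx, mul_comm _ S'.b, mul_assoc, ← pow_succ, coe_eta,
        hζ.toInteger_cube_eq_one, mul_one]

/-- Given `S' : Solution'`, then there is `S₁ : Solution` such that
`S₁.multiplicity = S'.multiplicity`. -/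
lemma exists_Solution_of_Solution' : ∃ (S₁ : Solution hζ), S₁.multiplicity = S'.multiplicity := by
  obtain ⟨a, b, H, coprime, ha, hb, hab⟩ := ex_cube_add_cube_eq_and_isCoprime_and_not_dvd_and_dvd S'
  exact ⟨
  { a := a
    b := b
    c := S'.c
    u := S'.u
    ha := ha
    hb := hb
    hc := S'.hc
    coprime := coprime
    hcdvd := S'.hcdvd
    H := H
    hab := hab }, rfl⟩

end IsCyclotomicExtension

namespace Solution

lemma a_add_eta_mul_b : S.a + (IsPrimitiveRoot.isUnit (hζ.toInteger_isPrimitiveRoot) (by decide)).unit * S.b = (S.a + S.b) + (hζ.toInteger - 1) * S.b := by rw [coe_eta]; ring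

/-- Given `(S : Solution)`, we have that `(hζ.toInteger - 1) ∣ (S.a + (IsPrimitiveRoot.isUnit (hζ.toInteger_isPrimitiveRoot) (by decide)).unit * S.b)`. -/
lemma lambda_dvd_a_add_eta_mul_b : (hζ.toInteger - 1) ∣ (S.a + (IsPrimitiveRoot.isUnit (hζ.toInteger_isPrimitiveRoot) (by decide)).unit * S.b) :=
  a_add_eta_mul_b S ▸ dvd_add (dvd_trans (dvd_pow_self _ (by decide)) S.hab) ⟨S.b, by rw [mul_comm]⟩

/-- Given `(S : Solution)`, we have that `(hζ.toInteger - 1) ∣ (S.a + (IsPrimitiveRoot.isUnit (hζ.toInteger_isPrimitiveRoot) (by decide)).unit ^ 2 * S.b)`. -/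
lemma lambda_dvd_a_add_eta_sq_mul_b : (hζ.toInteger - 1) ∣ (S.a + (IsPrimitiveRoot.isUnit (hζ.toInteger_isPrimitiveRoot) (by decide)).unit ^ 2 * S.b) := by
  rw [show S.a + (IsPrimitiveRoot.isUnit (hζ.toInteger_isPrimitiveRoot) (by decide)).unit ^ 2 * S.b = (S.a + S.b) + (hζ.toInteger - 1) ^ 2 * S.b + 2 * (hζ.toInteger - 1) * S.b by rw [coe_eta]; ring]
  exact dvd_add (dvd_add (dvd_trans (dvd_pow_self _ (by decide)) S.hab) ⟨(hζ.toInteger - 1) * S.b, by ring⟩)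
    ⟨2 * S.b, by ring⟩

section IsCyclotomicExtension

variable [NumberField K] [IsCyclotomicExtension {3} ℚ K]

/-- Given `(S : Solution)`, we have that `(hζ.toInteger - 1) ^ 2` does not divide `S.a + (IsPrimitiveRoot.isUnit (hζ.toInteger_isPrimitiveRoot) (by decide)).unit * S.b`. -/
lemma lambda_sq_not_dvd_a_add_eta_mul_b : ¬ (hζ.toInteger - 1) ^ 2 ∣ (S.a + (IsPrimitiveRoot.isUnit (hζ.toInteger_isPrimitiveRoot) (by decide)).unit * S.b) := by
  simp_rw [a_add_eta_mul_b, dvd_add_right S.hab, pow_two, mul_dvd_mul_iff_left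
    hζ.zeta_sub_one_prime'.ne_zero, S.hb, not_false_eq_true]

/-- Given `(S : Solution)`, we have that `(hζ.toInteger - 1) ^ 2` does not divide `S.a + (IsPrimitiveRoot.isUnit (hζ.toInteger_isPrimitiveRoot) (by decide)).unit ^ 2 * S.b`. -/
lemma lambda_sq_not_dvd_a_add_eta_sq_mul_b : ¬ (hζ.toInteger - 1) ^ 2 ∣ (S.a + (IsPrimitiveRoot.isUnit (hζ.toInteger_isPrimitiveRoot) (by decide)).unit ^ 2 * S.b) := by
  intro ⟨k, hk⟩
  rcases S.hab with ⟨k', hk'⟩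
  refine S.hb ⟨(k - k') * (-(IsPrimitiveRoot.isUnit (hζ.toInteger_isPrimitiveRoot) (by decide)).unit), ?_⟩
  rw [show S.a + (IsPrimitiveRoot.isUnit (hζ.toInteger_isPrimitiveRoot) (by decide)).unit ^ 2 * S.b = S.a + S.b - S.b + (IsPrimitiveRoot.isUnit (hζ.toInteger_isPrimitiveRoot) (by decide)).unit ^ 2 * S.b by ring, hk',
    show (hζ.toInteger - 1) ^ 2 * k' - S.b + (IsPrimitiveRoot.isUnit (hζ.toInteger_isPrimitiveRoot) (by decide)).unit ^ 2 * S.b = (hζ.toInteger - 1) * (S.b * ((IsPrimitiveRoot.isUnit (hζ.toInteger_isPrimitiveRoot) (by decide)).unit + 1) + (hζ.toInteger - 1) * k') by rw [coe_eta]; ring,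
    pow_two, mul_assoc] at hk
  simp only [mul_eq_mul_left_iff, hζ.zeta_sub_one_prime'.ne_zero, or_false] at hk
  apply_fun (· * -↑(IsPrimitiveRoot.isUnit (hζ.toInteger_isPrimitiveRoot) (by decide)).unit) at hk
  rw [show (S.b * ((IsPrimitiveRoot.isUnit (hζ.toInteger_isPrimitiveRoot) (by decide)).unit + 1) + (hζ.toInteger - 1) * k') * -(IsPrimitiveRoot.isUnit (hζ.toInteger_isPrimitiveRoot) (by decide)).unit = (-S.b) * ((IsPrimitiveRoot.isUnit (hζ.toInteger_isPrimitiveRoot) (by decide)).unit ^ 2 + (IsPrimitiveRoot.isUnit (hζ.toInteger_isPrimitiveRoot) (by decide)).unit + 1 - 1) - (IsPrimitiveRoot.isUnit (hζ.toInteger_isPrimitiveRoot) (by decide)).unit * (hζ.toInteger - 1) * k' by ring,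
    eta_sq, show -S.b * (-↑(IsPrimitiveRoot.isUnit (hζ.toInteger_isPrimitiveRoot) (by decide)).unit - 1 + ↑(IsPrimitiveRoot.isUnit (hζ.toInteger_isPrimitiveRoot) (by decide)).unit + 1 - 1) = S.b by ring, sub_eq_iff_eq_add] at hk
  rw [hk]
  ring

attribute [local instance] IsCyclotomicExtension.Rat.three_pid
attribute [local instance] UniqueFactorizationMonoid.toGCDMonoid

/-- If `p : 𝓞 K` is a prime that divides both `S.a + S.b` and `S.a + (IsPrimitiveRoot.isUnit (hζ.toInteger_isPrimitiveRoot) (by decide)).unit * S.b`, then `p`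
is associated with `(hζ.toInteger - 1)`. -/
lemma associated_of_dvd_a_add_b_of_dvd_a_add_eta_mul_b {p : 𝓞 K} (hp : Prime p)
    (hpab : p ∣ S.a + S.b) (hpaηb : p ∣ S.a + (IsPrimitiveRoot.isUnit (hζ.toInteger_isPrimitiveRoot) (by decide)).unit * S.b) : Associated p (hζ.toInteger - 1) := by
  suffices p_lam : p ∣ (hζ.toInteger - 1) from hp.associated_of_dvd hζ.zeta_sub_one_prime' p_lam
  rw [← one_mul S.a, ← one_mul S.b] at hpab
  rw [← one_mul S.a] at hpaηb
  have := dvd_mul_sub_mul_mul_gcd_of_dvd hpab hpaηb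
  rwa [one_mul, one_mul, coe_eta, IsUnit.dvd_mul_right <| (gcd_isUnit_iff _ _).2 S.coprime] at this

/-- If `p : 𝓞 K` is a prime that divides both `S.a + S.b` and `S.a + (IsPrimitiveRoot.isUnit (hζ.toInteger_isPrimitiveRoot) (by decide)).unit ^ 2 * S.b`, then `p`
is associated with `(hζ.toInteger - 1)`. -/
lemma associated_of_dvd_a_add_b_of_dvd_a_add_eta_sq_mul_b {p : 𝓞 K} (hp : Prime p)
    (hpab : p ∣ (S.a + S.b)) (hpaηsqb : p ∣ (S.a + (IsPrimitiveRoot.isUnit (hζ.toInteger_isPrimitiveRoot) (by decide)).unit ^ 2 * S.b)) : Associated p (hζ.toInteger - 1) := by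
  suffices p_lam : p ∣ (hζ.toInteger - 1) from hp.associated_of_dvd hζ.zeta_sub_one_prime' p_lam
  rw [← one_mul S.a, ← one_mul S.b] at hpab
  rw [← one_mul S.a] at hpaηsqb
  have := dvd_mul_sub_mul_mul_gcd_of_dvd hpab hpaηsqb
  rw [one_mul, mul_one, IsUnit.dvd_mul_right <| (gcd_isUnit_iff _ _).2 S.coprime, ← dvd_neg] at this
  convert! dvd_mul_of_dvd_left this (IsPrimitiveRoot.isUnit (hζ.toInteger_isPrimitiveRoot) (by decide)).unit using 1
  rw [eta_sq, neg_sub, sub_mul, sub_mul, neg_mul, ← pow_two, eta_sq, coe_eta]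
  ring

/-- If `p : 𝓞 K` is a prime that divides both `S.a + (IsPrimitiveRoot.isUnit (hζ.toInteger_isPrimitiveRoot) (by decide)).unit * S.b` and `S.a + (IsPrimitiveRoot.isUnit (hζ.toInteger_isPrimitiveRoot) (by decide)).unit ^ 2 * S.b`, then `p`
is associated with `(hζ.toInteger - 1)`. -/
lemma associated_of_dvd_a_add_eta_mul_b_of_dvd_a_add_eta_sq_mul_b {p : 𝓞 K} (hp : Prime p)
    (hpaηb : p ∣ S.a + (IsPrimitiveRoot.isUnit (hζ.toInteger_isPrimitiveRoot) (by decide)).unit * S.b) (hpaηsqb : p ∣ S.a + (IsPrimitiveRoot.isUnit (hζ.toInteger_isPrimitiveRoot) (by decide)).unit ^ 2 * S.b) : Associated p (hζ.toInteger - 1) := by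
  suffices p_lam : p ∣ (hζ.toInteger - 1) from hp.associated_of_dvd hζ.zeta_sub_one_prime' p_lam
  rw [← one_mul S.a] at hpaηb
  rw [← one_mul S.a] at hpaηsqb
  have := dvd_mul_sub_mul_mul_gcd_of_dvd hpaηb hpaηsqb
  rw [one_mul, mul_one, IsUnit.dvd_mul_right <| (gcd_isUnit_iff _ _).2 S.coprime] at this
  convert! (dvd_mul_of_dvd_left (dvd_mul_of_dvd_left this (IsPrimitiveRoot.isUnit (hζ.toInteger_isPrimitiveRoot) (by decide)).unit) (IsPrimitiveRoot.isUnit (hζ.toInteger_isPrimitiveRoot) (by decide)).unit) using 1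
  symm
  calc _ = (-(IsPrimitiveRoot.isUnit (hζ.toInteger_isPrimitiveRoot) (by decide)).unit.1 - 1 - (IsPrimitiveRoot.isUnit (hζ.toInteger_isPrimitiveRoot) (by decide)).unit) * (-(IsPrimitiveRoot.isUnit (hζ.toInteger_isPrimitiveRoot) (by decide)).unit - 1) := by rw [eta_sq, mul_assoc, ← pow_two, eta_sq]
  _ = 2 * (IsPrimitiveRoot.isUnit (hζ.toInteger_isPrimitiveRoot) (by decide)).unit.1 ^ 2 + 3 * (IsPrimitiveRoot.isUnit (hζ.toInteger_isPrimitiveRoot) (by decide)).unit + 1 := by ring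
  _ = (hζ.toInteger - 1) := by rw [eta_sq, coe_eta]; ring

end IsCyclotomicExtension

/-- Given `S : Solution`, we let `S.y` be any element such that `S.a + (IsPrimitiveRoot.isUnit (hζ.toInteger_isPrimitiveRoot) (by decide)).unit * S.b = (hζ.toInteger - 1) * S.y` -/
noncomputable def y := (lambda_dvd_a_add_eta_mul_b S).choose
lemma y_spec : S.a + (IsPrimitiveRoot.isUnit (hζ.toInteger_isPrimitiveRoot) (by decide)).unit * S.b = (hζ.toInteger - 1) * S.y :=
  (lambda_dvd_a_add_eta_mul_b S).choose_spec

/-- Given `S : Solution`, we let `S.z` be any element such that `S.a + (IsPrimitiveRoot.isUnit (hζ.toInteger_isPrimitiveRoot) (by decide)).unit ^ 2 * S.b = (hζ.toInteger - 1) * S.z` -/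
noncomputable def z := (lambda_dvd_a_add_eta_sq_mul_b S).choose
lemma z_spec : S.a + (IsPrimitiveRoot.isUnit (hζ.toInteger_isPrimitiveRoot) (by decide)).unit ^ 2 * S.b = (hζ.toInteger - 1) * S.z :=
  (lambda_dvd_a_add_eta_sq_mul_b S).choose_spec

variable [NumberField K] [IsCyclotomicExtension {3} ℚ K]

lemma lambda_not_dvd_y : ¬ (hζ.toInteger - 1) ∣ S.y := fun h ↦ by
  replace h := mul_dvd_mul_left (((IsPrimitiveRoot.isUnit (hζ.toInteger_isPrimitiveRoot) (by decide)).unit : 𝓞 K) - 1) h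
  rw [coe_eta, ← y_spec, ← pow_two] at h
  exact lambda_sq_not_dvd_a_add_eta_mul_b _ h

lemma lambda_not_dvd_z : ¬ (hζ.toInteger - 1) ∣ S.z := fun h ↦ by
  replace h := mul_dvd_mul_left (((IsPrimitiveRoot.isUnit (hζ.toInteger_isPrimitiveRoot) (by decide)).unit : 𝓞 K) - 1) h
  rw [coe_eta, ← z_spec, ← pow_two] at h
  exact lambda_sq_not_dvd_a_add_eta_sq_mul_b _ h

/-- We have that `(hζ.toInteger - 1) ^ (3*S.multiplicity-2)` divides `S.a + S.b`. -/
lemma lambda_pow_dvd_a_add_b : (hζ.toInteger - 1) ^ (3 * S.multiplicity - 2) ∣ S.a + S.b := by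
  have h : (hζ.toInteger - 1) ^ S.multiplicity ∣ S.c := pow_multiplicity_dvd _ _
  replace h : ((hζ.toInteger - 1) ^ multiplicity S) ^ 3 ∣ S.u * S.c ^ 3 := by simp [h]
  rw [← S.H, a_cube_add_b_cube_eq_mul, ← pow_mul, mul_comm, y_spec, z_spec] at h
  apply hζ.zeta_sub_one_prime'.pow_dvd_of_dvd_mul_left _ S.lambda_not_dvd_z
  apply hζ.zeta_sub_one_prime'.pow_dvd_of_dvd_mul_left _ S.lambda_not_dvd_y
  have := S.two_le_multiplicity
  rw [show 3 * multiplicity S = 3 * multiplicity S - 2 + 1 + 1 by lia, pow_succ, pow_succ,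
    show (S.a + S.b) * ((hζ.toInteger - 1) * y S) * ((hζ.toInteger - 1) * z S) = (S.a + S.b) * y S * z S * (hζ.toInteger - 1) * (hζ.toInteger - 1) by ring] at h
  simp only [mul_dvd_mul_iff_right hζ.zeta_sub_one_prime'.ne_zero] at h
  rwa [show (S.a + S.b) * y S * z S = y S * (z S * (S.a + S.b)) by ring] at h

/-- Given `S : Solution`, we let `S.x` be any element such that
`S.a + S.b = (hζ.toInteger - 1) ^ (3*S.multiplicity-2) * S.x` -/
noncomputable def x := (lambda_pow_dvd_a_add_b S).choose
lemma x_spec : S.a + S.b = (hζ.toInteger - 1) ^ (3 * S.multiplicity - 2) * S.x :=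
  (lambda_pow_dvd_a_add_b S).choose_spec

/-- Given `S : Solution`, we let `S.w` be any element such that `S.c = (hζ.toInteger - 1) ^ S.multiplicity * S.w` -/
noncomputable def w :=
  (pow_multiplicity_dvd (hζ.toInteger - 1) S.c).choose

lemma w_spec : S.c = (hζ.toInteger - 1) ^ S.multiplicity * S.w :=
  (pow_multiplicity_dvd (hζ.toInteger - 1) S.c).choose_spec

lemma lambda_not_dvd_w : ¬ (hζ.toInteger - 1) ∣ S.w := fun h ↦ by
  refine S.toSolution'.multiplicity_lambda_c_finite.not_pow_dvd_of_multiplicity_lt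
    (lt_add_one S.multiplicity) ?_
  rw [pow_succ', mul_comm]
  exact S.w_spec ▸ (mul_dvd_mul_left ((hζ.toInteger - 1) ^ S.multiplicity) h)

lemma lambda_not_dvd_x : ¬ (hζ.toInteger - 1) ∣ S.x := fun h ↦ by
  replace h := mul_dvd_mul_left ((hζ.toInteger - 1) ^ (3 * S.multiplicity - 2)) h
  rw [mul_comm, ← x_spec] at h
  replace h :=
    mul_dvd_mul (mul_dvd_mul h S.lambda_dvd_a_add_eta_mul_b) S.lambda_dvd_a_add_eta_sq_mul_b
  simp only [← a_cube_add_b_cube_eq_mul, S.H, w_spec, Units.isUnit, IsUnit.dvd_mul_left] at h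
  rw [← pow_succ', mul_comm, ← mul_assoc, ← pow_succ'] at h
  have := S.two_le_multiplicity
  rw [show 3 * multiplicity S - 2 + 1 + 1 = 3 * multiplicity S by lia, mul_pow, ← pow_mul,
    mul_comm _ 3, mul_dvd_mul_iff_left _] at h
  · exact lambda_not_dvd_w _ <| hζ.zeta_sub_one_prime'.dvd_of_dvd_pow h
  · simp [hζ.zeta_sub_one_prime'.ne_zero]

attribute [local instance] IsCyclotomicExtension.Rat.three_pid

lemma isCoprime_helper {r s t w : 𝓞 K} (hr : ¬ (hζ.toInteger - 1) ∣ r) (hs : ¬ (hζ.toInteger - 1) ∣ s)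
    (Hp : ∀ {p}, Prime p → p ∣ t → p ∣ w → Associated p (hζ.toInteger - 1)) (H₁ : ∀ {q}, q ∣ r → q ∣ t)
    (H₂ : ∀ {q}, q ∣ s → q ∣ w) : IsCoprime r s := by
  refine isCoprime_of_prime_dvd (not_and.2 (fun _ hz ↦ hs (by simp [hz])))
    (fun p hp p_dvd_r p_dvd_s ↦ hr ?_)
  rwa [← Associated.dvd_iff_dvd_left <| Hp hp (H₁ p_dvd_r) (H₂ p_dvd_s)]

lemma isCoprime_x_y : IsCoprime S.x S.y :=
  isCoprime_helper (lambda_not_dvd_x S) (lambda_not_dvd_y S)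
    (associated_of_dvd_a_add_b_of_dvd_a_add_eta_mul_b S) (fun hq ↦ x_spec S ▸ hq.mul_left _)
      (fun hq ↦ y_spec S ▸ hq.mul_left _)

lemma isCoprime_x_z : IsCoprime S.x S.z :=
  isCoprime_helper (lambda_not_dvd_x S) (lambda_not_dvd_z S)
    (associated_of_dvd_a_add_b_of_dvd_a_add_eta_sq_mul_b S) (fun hq ↦ x_spec S ▸ hq.mul_left _)
      (fun hq ↦ z_spec S ▸ hq.mul_left _)

lemma isCoprime_y_z : IsCoprime S.y S.z :=
  isCoprime_helper (lambda_not_dvd_y S) (lambda_not_dvd_z S)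
    (associated_of_dvd_a_add_eta_mul_b_of_dvd_a_add_eta_sq_mul_b S)
    (fun hq ↦ y_spec S ▸ hq.mul_left _) (fun hq ↦ z_spec S ▸ hq.mul_left _)

lemma x_mul_y_mul_z_eq_u_mul_w_cube : S.x * S.y * S.z = S.u * S.w ^ 3 := by
  suffices hh : (hζ.toInteger - 1) ^ (3 * S.multiplicity - 2) * S.x * (hζ.toInteger - 1) * S.y * (hζ.toInteger - 1) * S.z =
      S.u * (hζ.toInteger - 1) ^ (3 * S.multiplicity) * S.w ^ 3 by
    rw [show (hζ.toInteger - 1) ^ (3 * multiplicity S - 2) * x S * (hζ.toInteger - 1) * y S * (hζ.toInteger - 1) * z S =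
      (hζ.toInteger - 1) ^ (3 * multiplicity S - 2) * (hζ.toInteger - 1) * (hζ.toInteger - 1) * x S * y S * z S by ring] at hh
    have := S.two_le_multiplicity
    rw [mul_comm _ ((hζ.toInteger - 1) ^ (3 * multiplicity S)), ← pow_succ, ← pow_succ,
      show 3 * multiplicity S - 2 + 1 + 1 = 3 * multiplicity S by lia, mul_assoc, mul_assoc,
      mul_assoc] at hh
    simp only [mul_eq_mul_left_iff, pow_eq_zero_iff', hζ.zeta_sub_one_prime'.ne_zero, ne_eq,
      mul_eq_zero, OfNat.ofNat_ne_zero, false_or, false_and, or_false] at hh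
    convert! hh using 1
    ring
  simp only [← x_spec, mul_assoc, ← y_spec, ← z_spec]
  rw [mul_comm 3, pow_mul, ← mul_pow, ← w_spec, ← S.H, a_cube_add_b_cube_eq_mul]
  ring

lemma exists_cube_associated :
    (∃ X, Associated (X ^ 3) S.x) ∧ (∃ Y, Associated (Y ^ 3) S.y) ∧
      ∃ Z, Associated (Z ^ 3) S.z := by
  have h₁ := S.isCoprime_x_z.mul_left S.isCoprime_y_z
  have h₂ : Associated (S.w ^ 3) (S.x * S.y * S.z) :=
    ⟨S.u, by rw [x_mul_y_mul_z_eq_u_mul_w_cube S, mul_comm]⟩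
  obtain ⟨T, h₃⟩ := exists_associated_pow_of_associated_pow_mul h₁ h₂
  exact ⟨exists_associated_pow_of_associated_pow_mul S.isCoprime_x_y h₃,
    exists_associated_pow_of_associated_pow_mul S.isCoprime_x_y.symm (mul_comm _ S.x ▸ h₃),
    exists_associated_pow_of_associated_pow_mul h₁.symm (mul_comm _ S.z ▸ h₂)⟩

/-- Given `S : Solution`, we let `S.u₁` and `S.X` be any elements such that
`S.X ^ 3 * S.u₁ = S.x` -/
noncomputable def X := (exists_cube_associated S).1.choose
noncomputable def u₁ := (exists_cube_associated S).1.choose_spec.choose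
lemma X_u₁_spec : S.X ^ 3 * S.u₁ = S.x :=
  (exists_cube_associated S).1.choose_spec.choose_spec

/-- Given `S : Solution`, we let `S.u₂` and `S.Y` be any elements such that
`S.Y ^ 3 * S.u₂ = S.y` -/
noncomputable def Y := (exists_cube_associated S).2.1.choose
noncomputable def u₂ := (exists_cube_associated S).2.1.choose_spec.choose
lemma Y_u₂_spec : S.Y ^ 3 * S.u₂ = S.y :=
  (exists_cube_associated S).2.1.choose_spec.choose_spec

/-- Given `S : Solution`, we let `S.u₃` and `S.Z` be any elements such that
`S.Z ^ 3 * S.u₃ = S.z` -/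
noncomputable def Z := (exists_cube_associated S).2.2.choose
noncomputable def u₃ := (exists_cube_associated S).2.2.choose_spec.choose
lemma Z_u₃_spec : S.Z ^ 3 * S.u₃ = S.z :=
  (exists_cube_associated S).2.2.choose_spec.choose_spec

lemma X_ne_zero : S.X ≠ 0 :=
  fun h ↦ lambda_not_dvd_x S <| by simp [← X_u₁_spec, h]

lemma lambda_not_dvd_X : ¬ (hζ.toInteger - 1) ∣ S.X :=
  fun h ↦ lambda_not_dvd_x S <| X_u₁_spec S ▸ dvd_mul_of_dvd_left (dvd_pow h (by decide)) _

lemma lambda_not_dvd_Y : ¬ (hζ.toInteger - 1) ∣ S.Y :=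
  fun h ↦ lambda_not_dvd_y S <| Y_u₂_spec S ▸ dvd_mul_of_dvd_left (dvd_pow h (by decide)) _

lemma lambda_not_dvd_Z : ¬ (hζ.toInteger - 1) ∣ S.Z :=
  fun h ↦ lambda_not_dvd_z S <| Z_u₃_spec S ▸ dvd_mul_of_dvd_left (dvd_pow h (by decide)) _

lemma isCoprime_Y_Z : IsCoprime S.Y S.Z := by
  rw [← IsCoprime.pow_iff (m := 3) (n := 3) (by decide) (by decide),
    ← isCoprime_mul_unit_right_left S.u₂.isUnit, ← isCoprime_mul_unit_right_right S.u₃.isUnit,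
    Y_u₂_spec, Z_u₃_spec]
  exact isCoprime_y_z S

-- This is just a computation and the formulas are too long.
set_option linter.style.whitespace false in
lemma formula1 : S.X^3*S.u₁*(hζ.toInteger - 1)^(3*S.multiplicity-2)+S.Y^3*S.u₂*(hζ.toInteger - 1)*(IsPrimitiveRoot.isUnit (hζ.toInteger_isPrimitiveRoot) (by decide)).unit+S.Z^3*S.u₃*(hζ.toInteger - 1)*(IsPrimitiveRoot.isUnit (hζ.toInteger_isPrimitiveRoot) (by decide)).unit^2 = 0 := by
  rw [X_u₁_spec, Y_u₂_spec, Z_u₃_spec, mul_comm S.x, ← x_spec, mul_comm S.y, ← y_spec, mul_comm S.z,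
    ← z_spec, eta_sq]
  calc _ = S.a+S.b+(IsPrimitiveRoot.isUnit (hζ.toInteger_isPrimitiveRoot) (by decide)).unit^2*S.b-S.a+(IsPrimitiveRoot.isUnit (hζ.toInteger_isPrimitiveRoot) (by decide)).unit^2*S.b+2*(IsPrimitiveRoot.isUnit (hζ.toInteger_isPrimitiveRoot) (by decide)).unit*S.b+S.b := by ring
  _ = 0 := by rw [eta_sq]; ring

/-- Let `u₄ := (IsPrimitiveRoot.isUnit (hζ.toInteger_isPrimitiveRoot) (by decide)).unit * S.u₃ * S.u₂⁻¹` -/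
noncomputable def u₄ := (IsPrimitiveRoot.isUnit (hζ.toInteger_isPrimitiveRoot) (by decide)).unit * S.u₃ * S.u₂⁻¹
lemma u₄_def : S.u₄ = (IsPrimitiveRoot.isUnit (hζ.toInteger_isPrimitiveRoot) (by decide)).unit * S.u₃ * S.u₂⁻¹ := rfl
/-- Let `u₅ := -(IsPrimitiveRoot.isUnit (hζ.toInteger_isPrimitiveRoot) (by decide)).unit ^ 2 * S.u₁ * S.u₂⁻¹` -/
noncomputable def u₅ := -(IsPrimitiveRoot.isUnit (hζ.toInteger_isPrimitiveRoot) (by decide)).unit ^ 2 * S.u₁ * S.u₂⁻¹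
lemma u₅_def : S.u₅ = -(IsPrimitiveRoot.isUnit (hζ.toInteger_isPrimitiveRoot) (by decide)).unit ^ 2 * S.u₁ * S.u₂⁻¹ := rfl

example (a b : 𝓞 K) (ha : a ≠ 0) (hb : b ≠ 0) : a * b ≠ 0 := by
  exact mul_ne_zero ha hb

-- This is just a computation and the formulas are too long.
set_option linter.style.whitespace false in
lemma formula2 :
    S.Y ^ 3 + S.u₄ * S.Z ^ 3 = S.u₅ * ((hζ.toInteger - 1) ^ (S.multiplicity - 1) * S.X) ^ 3 := by
  rw [u₅_def, neg_mul, neg_mul, Units.val_neg, neg_mul, eq_neg_iff_add_eq_zero, add_assoc,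
    add_comm (S.u₄ * S.Z ^ 3), ← add_assoc, add_comm (S.Y ^ 3)]
  apply mul_right_cancel₀ <| mul_ne_zero
    (mul_ne_zero hζ.zeta_sub_one_prime'.ne_zero S.u₂.isUnit.ne_zero) (Units.isUnit (IsPrimitiveRoot.isUnit (hζ.toInteger_isPrimitiveRoot) (by decide)).unit).ne_zero
  simp only [zero_mul, add_mul]
  rw [← formula1 S]
  congrm ?_ + ?_ + ?_
  · have : (S.multiplicity-1)*3+1 = 3*S.multiplicity-2 := by have := S.two_le_multiplicity; lia
    calc _ = S.X^3 *(S.u₂*S.u₂⁻¹)*((IsPrimitiveRoot.isUnit (hζ.toInteger_isPrimitiveRoot) (by decide)).unit^3*S.u₁)*((hζ.toInteger - 1)^((S.multiplicity-1)*3)*(hζ.toInteger - 1)) := by push_cast; ring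
    _ = S.X^3*S.u₁*(hζ.toInteger - 1)^(3*S.multiplicity-2) := by simp [hζ.toInteger_cube_eq_one, ← pow_succ, this]
  · ring
  · simp only [u₄_def, inv_eq_one_div, mul_div_assoc', mul_one, val_div_eq_divp, Units.val_mul,
      IsUnit.unit_spec, divp_mul_eq_mul_divp, divp_eq_iff_mul_eq]
    ring

-- This is just a computation and the formulas are too long.
set_option linter.style.whitespace false in
lemma lambda_sq_div_u₅_mul : (hζ.toInteger - 1) ^ 2 ∣ S.u₅ * ((hζ.toInteger - 1) ^ (S.multiplicity - 1) * S.X) ^ 3 := by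
  use (hζ.toInteger - 1)^(3*S.multiplicity-5)*S.u₅*(S.X^3)
  have : 3*(S.multiplicity-1) = 2+(3*S.multiplicity-5) := by have := S.two_le_multiplicity; lia
  calc _ = (hζ.toInteger - 1)^(3*(S.multiplicity-1))*S.u₅*S.X^3 := by ring
  _ = (hζ.toInteger - 1)^2*(hζ.toInteger - 1)^(3*S.multiplicity-5)*S.u₅*S.X^3 := by rw [this, pow_add]
  _ = (hζ.toInteger - 1)^2*((hζ.toInteger - 1)^(3*S.multiplicity-5)*S.u₅*S.X^3) := by ring

lemma u₄_eq_one_or_neg_one : S.u₄ = 1 ∨ S.u₄ = -1 := by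
  have : (hζ.toInteger - 1) ^ 2 ∣ (hζ.toInteger - 1) ^ 4 := ⟨(hζ.toInteger - 1) ^ 2, by ring⟩
  have h := S.lambda_sq_div_u₅_mul
  apply IsCyclotomicExtension.Rat.Three.eq_one_or_neg_one_of_unit_of_congruent hζ
  rcases h with ⟨X, hX⟩
  rcases lambda_pow_four_dvd_cube_sub_one_or_add_one_of_lambda_not_dvd hζ S.lambda_not_dvd_Y with
    HY | HY <;> rcases lambda_pow_four_dvd_cube_sub_one_or_add_one_of_lambda_not_dvd
      hζ S.lambda_not_dvd_Z with HZ | HZ <;> replace HY := this.trans HY <;> replace HZ :=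
      this.trans HZ <;> rcases HY with ⟨Y, hY⟩ <;> rcases HZ with ⟨Z, hZ⟩
  · refine ⟨-1, X - Y - S.u₄ * Z, ?_⟩
    rw [show (hζ.toInteger - 1) ^ 2 * (X - Y - S.u₄ * Z) = (hζ.toInteger - 1) ^ 2 * X - (hζ.toInteger - 1) ^ 2 * Y - S.u₄ * ((hζ.toInteger - 1) ^ 2 * Z) by ring,
      ← hX, ← hY, ← hZ, ← formula2]
    ring
  · refine ⟨1, -X + Y + S.u₄ * Z, ?_⟩
    rw [show (hζ.toInteger - 1) ^ 2 * (-X + Y + S.u₄ * Z) = -((hζ.toInteger - 1) ^ 2 * X - (hζ.toInteger - 1) ^ 2 * Y - S.u₄ * ((hζ.toInteger - 1) ^ 2 * Z)) by ring,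
      ← hX, ← hY, ← hZ, ← formula2]
    ring
  · refine ⟨1, X - Y - S.u₄ * Z, ?_⟩
    rw [show (hζ.toInteger - 1) ^ 2 * (X - Y - S.u₄ * Z) = (hζ.toInteger - 1) ^ 2 * X - (hζ.toInteger - 1) ^ 2 * Y - S.u₄ * ((hζ.toInteger - 1) ^ 2 * Z) by ring,
      ← hX, ← hY, ← hZ, ← formula2]
    ring
  · refine ⟨-1, -X + Y + S.u₄ * Z, ?_⟩
    rw [show (hζ.toInteger - 1) ^ 2 * (-X + Y + S.u₄ * Z) = -((hζ.toInteger - 1) ^ 2 * X - (hζ.toInteger - 1) ^ 2 * Y - S.u₄ * ((hζ.toInteger - 1) ^ 2 * Z)) by ring,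
      ← hX, ← hY, ← hZ, ← formula2]
    ring

lemma u₄_sq : S.u₄ ^ 2 = 1 := by
  rcases S.u₄_eq_one_or_neg_one with h | h <;> simp [h]

/-- Given `S : Solution`, we have that
`S.Y ^ 3 + (S.u₄ * S.Z) ^ 3 = S.u₅ * ((hζ.toInteger - 1) ^ (S.multiplicity - 1) * S.X) ^ 3`. -/
lemma formula3 :
    S.Y ^ 3 + (S.u₄ * S.Z) ^ 3 = S.u₅ * ((hζ.toInteger - 1) ^ (S.multiplicity - 1) * S.X) ^ 3 :=
  calc S.Y ^ 3 + (S.u₄ * S.Z) ^ 3 = S.Y ^ 3 + S.u₄ ^ 2 * S.u₄ * S.Z ^ 3 := by ring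
  _ = S.Y ^ 3 + S.u₄ * S.Z ^ 3 := by simp [← Units.val_pow_eq_pow_val, S.u₄_sq]
  _ = S.u₅ * ((hζ.toInteger - 1) ^ (S.multiplicity - 1) * S.X) ^ 3 := S.formula2

/-- Given `S : Solution`, we construct `S₁ : Solution'`, with smaller multiplicity of `(hζ.toInteger - 1)` in
  `c` (see `Solution'_descent_multiplicity_lt` below.). -/
noncomputable def Solution'_descent : Solution' hζ where
  a := S.Y
  b := S.u₄ * S.Z
  c := (hζ.toInteger - 1) ^ (S.multiplicity - 1) * S.X
  u := S.u₅
  ha := S.lambda_not_dvd_Y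
  hb := fun h ↦ S.lambda_not_dvd_Z <| Units.dvd_mul_left.1 h
  hc := fun h ↦ S.X_ne_zero <| by simpa [hζ.zeta_sub_one_prime'.ne_zero] using h
  coprime := (isCoprime_mul_unit_left_right S.u₄.isUnit _ _).2 S.isCoprime_Y_Z
  hcdvd := by
    refine dvd_mul_of_dvd_left (dvd_pow_self _ (fun h ↦ ?_)) _
    rw [Nat.sub_eq_iff_eq_add (le_trans (by simp) S.two_le_multiplicity), zero_add] at h
    simpa [h] using S.two_le_multiplicity
  H := formula3 S

/-- We have that `S.Solution'_descent.multiplicity = S.multiplicity - 1`. -/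
lemma Solution'_descent_multiplicity : S.Solution'_descent.multiplicity = S.multiplicity - 1 := by
  refine multiplicity_eq_of_dvd_of_not_dvd
    (by simp [Solution'_descent]) (fun h ↦ S.lambda_not_dvd_X ?_)
  obtain ⟨k, hk : (hζ.toInteger - 1) ^ (S.multiplicity - 1) * S.X = (hζ.toInteger - 1) ^ (S.multiplicity - 1 + 1) * k⟩ := h
  rw [pow_succ, mul_assoc] at hk
  simp only [mul_eq_mul_left_iff, pow_eq_zero_iff', hζ.zeta_sub_one_prime'.ne_zero, ne_eq,
    false_and, or_false] at hk
  simp [hk]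

/-- We have that `S.Solution'_descent.multiplicity < S.multiplicity`. -/
lemma Solution'_descent_multiplicity_lt :
    (Solution'_descent S).multiplicity < S.multiplicity := by
  rw [Solution'_descent_multiplicity S, Nat.sub_one]
  exact Nat.pred_lt <| by have := S.two_le_multiplicity; lia

/-- Given any `S : Solution`, there is another `S₁ : Solution` such that
  `S₁.multiplicity < S.multiplicity` -/
theorem exists_Solution_multiplicity_lt :
    ∃ S₁ : Solution hζ, S₁.multiplicity < S.multiplicity := by
  obtain ⟨S', hS'⟩ := exists_Solution_of_Solution' (Solution'_descent S)
  exact ⟨S', hS' ▸ Solution'_descent_multiplicity_lt S⟩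

end Solution

end FermatLastTheoremForThreeGen

end eisenstein

section Work
local notation "K3" => CyclotomicField 3 ℚ

instance : IsCyclotomicExtension {3} ℚ K3 := CyclotomicField.isCyclotomicExtension 3 ℚ

instance : NumberField K3 := IsCyclotomicExtension.numberField {3} ℚ _

noncomputable def zeta3 : K3 := IsCyclotomicExtension.zeta 3 ℚ K3

lemma zeta3_spec : IsPrimitiveRoot zeta3 3 := IsCyclotomicExtension.zeta_spec 3 ℚ K3

lemma no_sol (a b c : 𝓞 K3) (u : (𝓞 K3)ˣ)
    (hu : (u : 𝓞 K3) = zeta3_spec.toInteger ∨ (u : 𝓞 K3) = -zeta3_spec.toInteger ∨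
      (u : 𝓞 K3) = zeta3_spec.toInteger ^ 2 ∨ (u : 𝓞 K3) = -zeta3_spec.toInteger ^ 2)
    (hc : c ≠ 0) : a ^ 3 + b ^ 3 ≠ (u : 𝓞 K3) * c ^ 3 := by
  classical
  intro H
  set η : 𝓞 K3 := zeta3_spec.toInteger with hηdef
  have hP : Prime (η - 1) := zeta3_spec.zeta_sub_one_prime'
  have hη3 : η ^ 3 = 1 := zeta3_spec.toInteger_cube_eq_one
  have hs : η ^ 2 + η + 1 = 0 := by
    rcases mul_eq_zero.mp (show (η - 1) * (η ^ 2 + η + 1) = 0 by linear_combination hη3) with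
      h | h
    · exact absurd h (sub_ne_zero.mpr (fun he => hP.ne_zero (by rw [he]; ring)))
    · exact h
  have key := key_lemma hs hP
  letI : IsPrincipalIdealRing (𝓞 K3) := IsCyclotomicExtension.Rat.three_pid K3
  letI := IsBezout.toGCDDomain (𝓞 K3)
  -- not both a and b are zero
  have habz : ¬ (a = 0 ∧ b = 0) := by
    rintro ⟨rfl, rfl⟩
    exact hc (pow_eq_zero_iff (n := 3) (by norm_num) |>.mp
      ((Units.mul_right_eq_zero u).mp (by simpa using H.symm)))
  set g := gcd a b with hgdef
  have hg : g ≠ 0 := fun h => habz ((gcd_eq_zero_iff a b).mp h)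
  obtain ⟨a', ha'⟩ : g ∣ a := gcd_dvd_left a b
  obtain ⟨b', hb'⟩ : g ∣ b := gcd_dvd_right a b
  have hco : IsCoprime a' b' := by
    refine isCoprime_of_dvd a' b' (fun ⟨h1, h2⟩ => habz ?_) (fun z hz hz0 hza hzb => ?_)
    · subst h1 h2; simp only [mul_zero] at ha' hb'; exact ⟨ha', hb'⟩
    · have h1 : g * z ∣ g := dvd_gcd
        (ha' ▸ mul_dvd_mul_left g hza) (hb' ▸ mul_dvd_mul_left g hzb)
      have h2 : z ∣ 1 := (mul_dvd_mul_iff_left hg).mp (by simpa using h1)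
      exact hz (isUnit_of_dvd_one h2)
  have hgc : g ∣ c := by
    have h1 : g ^ 3 ∣ (u : 𝓞 K3) * c ^ 3 := by
      rw [← H]
      exact dvd_add (pow_dvd_pow_of_dvd (ha' ▸ dvd_mul_right g a') 3)
        (pow_dvd_pow_of_dvd (hb' ▸ dvd_mul_right g b') 3)
    rw [Units.dvd_mul_left] at h1
    exact (IsIntegrallyClosed.pow_dvd_pow_iff (n := 3) (by norm_num)).mp h1
  obtain ⟨c', hc'⟩ := hgc
  have hc'0 : c' ≠ 0 := fun h => hc (by rw [hc', h, mul_zero])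
  have H' : a' ^ 3 + b' ^ 3 = (u : 𝓞 K3) * c' ^ 3 := by
    refine mul_left_cancel₀ (pow_ne_zero 3 hg) ?_
    rw [ha', hb', hc'] at H
    linear_combination H
  have cube : ∀ x : 𝓞 K3, ¬ (η - 1) ∣ x →
      ∃ e : 𝓞 K3, (e = 1 ∨ e = -1) ∧ (η - 1) ^ 4 ∣ x ^ 3 - e := by
    intro x hx
    rcases lambda_pow_four_dvd_cube_sub_one_or_add_one_of_lambda_not_dvd zeta3_spec hx with h | h
    · exact ⟨1, Or.inl rfl, h⟩
    · exact ⟨-1, Or.inr rfl, by rwa [sub_neg_eq_add]⟩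
  have hsymmH : b' ^ 3 + a' ^ 3 = (u : 𝓞 K3) * c' ^ 3 := by linear_combination H'
  have main1 : ∀ x y : 𝓞 K3, x ^ 3 + y ^ 3 = (u : 𝓞 K3) * c' ^ 3 → IsCoprime x y →
      (η - 1) ∣ x → False := by
    intro x y hxy hcop hlx
    have hly : ¬ (η - 1) ∣ y := fun hly => hP.not_isUnit (hcop.isUnit_of_dvd' hlx hly)
    have hlc : ¬ (η - 1) ∣ c' := by
      intro hlc
      apply hly
      refine hP.dvd_of_dvd_pow (n := 3) ?_
      have e : y ^ 3 = (u : 𝓞 K3) * c' ^ 3 - x ^ 3 := by linear_combination hxy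
      rw [e]
      exact dvd_sub ((dvd_pow hlc three_ne_zero).mul_left _) (dvd_pow hlx three_ne_zero)
    obtain ⟨e1, he1, hd1⟩ := cube y hly
    obtain ⟨e2, he2, hd2⟩ := cube c' hlc
    have h4 : (η - 1) ^ 2 ∣ c' ^ 3 - e2 := (pow_dvd_pow _ (by norm_num)).trans hd2
    have h5 : (η - 1) ^ 2 ∣ y ^ 3 - e1 := (pow_dvd_pow _ (by norm_num)).trans hd1
    have h3a : (η - 1) ^ 2 ∣ x ^ 3 :=
      (pow_dvd_pow _ (by norm_num)).trans (pow_dvd_pow_of_dvd hlx 3)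
    have key3 : (η - 1) ^ 2 ∣ ((u : 𝓞 K3) * e2 - e1) := by
      have e : (u : 𝓞 K3) * e2 - e1 = x ^ 3 - (u : 𝓞 K3) * (c' ^ 3 - e2) + (y ^ 3 - e1) := by
        linear_combination -hxy
      rw [e]
      exact dvd_add (dvd_sub h3a (h4.mul_left _)) h5
    have he22 : e2 * e2 = 1 := by rcases he2 with rfl | rfl <;> ring
    have key4 : (η - 1) ^ 2 ∣ ((u : 𝓞 K3) - e1 * e2) := by
      have h6 := key3.mul_right e2
      have e7 : ((u : 𝓞 K3) * e2 - e1) * e2 = (u : 𝓞 K3) - e1 * e2 := by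
        linear_combination (u : 𝓞 K3) * he22
      rwa [e7] at h6
    refine key (u : 𝓞 K3) (e1 * e2) hu ?_ key4
    rcases he1 with rfl | rfl <;> rcases he2 with rfl | rfl <;> norm_num
  by_cases hla : (η - 1) ∣ a'
  · exact main1 a' b' H' hco hla
  by_cases hlb : (η - 1) ∣ b'
  · exact main1 b' a' hsymmH hco.symm hlb
  by_cases hlc : (η - 1) ∣ c'
  · let S' : FermatLastTheoremForThreeGen.Solution' zeta3_spec :=
      { a := a', b := b', c := c', u := u, ha := hla, hb := hlb, hc := hc'0,
        coprime := hco, hcdvd := hlc, H := H' }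
    obtain ⟨S, -⟩ := FermatLastTheoremForThreeGen.exists_Solution_of_Solution' S'
    obtain ⟨Smin, hSmin⟩ := S.exists_minimal
    obtain ⟨Sfin, hSfin⟩ := Smin.exists_Solution_multiplicity_lt
    have := hSmin Sfin
    omega
  · obtain ⟨e0, he0, hd0⟩ := cube a' hla
    obtain ⟨e1, he1, hd1⟩ := cube b' hlb
    obtain ⟨e2, he2, hd2⟩ := cube c' hlc
    have h40 : (η - 1) ^ 2 ∣ a' ^ 3 - e0 := (pow_dvd_pow _ (by norm_num)).trans hd0
    have h41 : (η - 1) ^ 2 ∣ b' ^ 3 - e1 := (pow_dvd_pow _ (by norm_num)).trans hd1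
    have h42 : (η - 1) ^ 2 ∣ c' ^ 3 - e2 := (pow_dvd_pow _ (by norm_num)).trans hd2
    have key3 : (η - 1) ^ 2 ∣ ((u : 𝓞 K3) * e2 - e0 - e1) := by
      have e : (u : 𝓞 K3) * e2 - e0 - e1 =
          (a' ^ 3 - e0) + (b' ^ 3 - e1) - (u : 𝓞 K3) * (c' ^ 3 - e2) := by
        linear_combination -H'
      rw [e]
      exact dvd_sub (dvd_add h40 h41) (h42.mul_left _)
    have he22 : e2 * e2 = 1 := by rcases he2 with rfl | rfl <;> ring
    have key4 : (η - 1) ^ 2 ∣ ((u : 𝓞 K3) - (e0 + e1) * e2) := by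
      have h6 := key3.mul_right e2
      have e7 : ((u : 𝓞 K3) * e2 - e0 - e1) * e2 = (u : 𝓞 K3) - (e0 + e1) * e2 := by
        linear_combination (u : 𝓞 K3) * he22
      rwa [e7] at h6
    refine key (u : 𝓞 K3) ((e0 + e1) * e2) hu ?_ key4
    rcases he0 with rfl | rfl <;> rcases he1 with rfl | rfl <;> rcases he2 with rfl | rfl <;>
      norm_num

lemma no_sol_K (u : (𝓞 K3)ˣ)
    (hu : (u : 𝓞 K3) = zeta3_spec.toInteger ∨ (u : 𝓞 K3) = -zeta3_spec.toInteger ∨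
      (u : 𝓞 K3) = zeta3_spec.toInteger ^ 2 ∨ (u : 𝓞 K3) = -zeta3_spec.toInteger ^ 2)
    (X Y : K3) : X ^ 3 + Y ^ 3 ≠ algebraMap (𝓞 K3) K3 (u : 𝓞 K3) := by
  intro h
  obtain ⟨aX, dX, hdX, hX⟩ := IsFractionRing.div_surjective (A := 𝓞 K3) X
  obtain ⟨aY, dY, hdY, hY⟩ := IsFractionRing.div_surjective (A := 𝓞 K3) Y
  have hdX0 : dX ≠ 0 := nonZeroDivisors.ne_zero hdX
  have hdY0 : dY ≠ 0 := nonZeroDivisors.ne_zero hdY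
  have hinj := IsFractionRing.injective (𝓞 K3) K3
  refine no_sol (aX * dY) (aY * dX) (dX * dY) u hu (mul_ne_zero hdX0 hdY0) (hinj ?_)
  have hdX' : algebraMap (𝓞 K3) K3 dX ≠ 0 := (map_ne_zero_iff _ hinj).mpr hdX0
  have hdY' : algebraMap (𝓞 K3) K3 dY ≠ 0 := (map_ne_zero_iff _ hinj).mpr hdY0
  rw [← hX, ← hY] at h
  field_simp at h
  simp only [map_add, map_mul, map_pow]
  linear_combination h

theorem unit_not_sum_of_cubes (ω : ℂ) (hω : ω ^ 3 = 1) (hω1 : ω ≠ 1)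
    (ε : ℂ) (hε : ε = ω ∨ ε = -ω ∨ ε = ω ^ 2 ∨ ε = -ω ^ 2) :
    ∀ x y : ℂ, x ∈ Subfield.closure ({ω} : Set ℂ) → y ∈ Subfield.closure ({ω} : Set ℂ) →
      x ^ 3 + y ^ 3 ≠ ε := by
  intro x y hx hy hxy
  have hω2 : ω ^ 2 + ω + 1 = 0 := by
    rcases mul_eq_zero.mp (show (ω - 1) * (ω ^ 2 + ω + 1) = 0 by linear_combination hω) with h | h
    · exact absurd (sub_eq_zero.mp h) hω1
    · exact h
  have hz := zeta3_spec
  let pb := hz.powerBasis ℚ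
  have hmin : (Polynomial.aeval ω) (minpoly ℚ pb.gen) = 0 := by
    rw [show pb.gen = zeta3 from hz.powerBasis_gen ℚ,
      ← Polynomial.cyclotomic_eq_minpoly_rat hz (by norm_num)]
    rw [Polynomial.cyclotomic_three]
    simp only [map_add, map_pow, Polynomial.aeval_X, map_one]
    exact hω2
  let φ := pb.lift ω hmin
  have hφζ : φ zeta3 = ω := by
    have h := pb.lift_gen ω hmin
    rwa [show pb.gen = zeta3 from hz.powerBasis_gen ℚ] at h
  have hrange : Subfield.closure ({ω} : Set ℂ) ≤ (φ : K3 →+* ℂ).fieldRange := by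
    refine Subfield.closure_le.mpr ?_
    rintro t ht
    rw [Set.mem_singleton_iff] at ht
    subst ht
    exact ⟨zeta3, hφζ⟩
  obtain ⟨X, hX⟩ := hrange hx
  obtain ⟨Y, hY⟩ := hrange hy
  have hu0 : IsUnit hz.toInteger := hz.toInteger_isPrimitiveRoot.isUnit (by norm_num)
  have hφη : φ (algebraMap (𝓞 K3) K3 hz.toInteger) = ω := by
    rw [show algebraMap (𝓞 K3) K3 hz.toInteger = zeta3 from rfl, hφζ]
  obtain ⟨u, hu, hεu⟩ : ∃ u : (𝓞 K3)ˣ, ((u : 𝓞 K3) = hz.toInteger ∨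
      (u : 𝓞 K3) = -hz.toInteger ∨ (u : 𝓞 K3) = hz.toInteger ^ 2 ∨
      (u : 𝓞 K3) = -hz.toInteger ^ 2) ∧ φ (algebraMap (𝓞 K3) K3 ((u : 𝓞 K3))) = ε := by
    rcases hε with rfl | rfl | rfl | rfl
    · exact ⟨hu0.unit, Or.inl hu0.unit_spec, by rw [hu0.unit_spec, hφη]⟩
    · refine ⟨-hu0.unit, Or.inr (Or.inl (by simp [hu0.unit_spec])), ?_⟩
      simp only [Units.val_neg, hu0.unit_spec, map_neg, hφη]
    · refine ⟨hu0.unit ^ 2, Or.inr (Or.inr (Or.inl (by simp [hu0.unit_spec]))), ?_⟩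
      simp only [Units.val_pow_eq_pow_val, hu0.unit_spec, map_pow, hφη]
    · refine ⟨-hu0.unit ^ 2, Or.inr (Or.inr (Or.inr (by simp [hu0.unit_spec]))), ?_⟩
      simp only [Units.val_neg, Units.val_pow_eq_pow_val, hu0.unit_spec, map_neg, map_pow, hφη]
  refine no_sol_K u hu X Y (φ.toRingHom.injective ?_)
  show (φ : K3 →+* ℂ) (X ^ 3 + Y ^ 3) = (φ : K3 →+* ℂ) (algebraMap (𝓞 K3) K3 ((u : 𝓞 K3)))
  rw [map_add, map_pow, map_pow, hX, hY, hxy, ← hεu]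
  rfl

end Work
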